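/- Let w : [1,∞) → ℝ be continuous and suppose that for all r ≥ 1, w(r) + (1/r)(∫₁^r w(t) dt)² ≤ B·r + A, where A, B ≥ 0 are constants with b := √(A + B) satisfying b² = A + B. Then ∫₁^r w(t) dt ≤ b·r for all r ≥ 1. -/
import Mathlib


open MeasureTheory intervalIntegral Set Real

/-- Barrier argument: if `w(r) + (1/r)(∫₁^r w)² ≤ B·r + A` with `A, B ≥ 0` and
`b = √(A + B)`, then `∫₁^r w ≤ b·r` for all `r ≥ 1`. -/
theorem barrier_integral_bound
    (w : ℝ → ℝ) (hw : ContinuousOn w (Ici 1))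
    (A B : ℝ) (hA : 0 ≤ A) (hB : 0 ≤ B)
    (b : ℝ) (hb : b = Real.sqrt (A + B))
    (hineq : ∀ r ≥ (1 : ℝ),
      w r + (1 / r) * (∫ t in (1 : ℝ)..r, w t) ^ 2 ≤ B * r + A) :
    ∀ r ≥ (1 : ℝ), (∫ t in (1 : ℝ)..r, w t) ≤ b * r := by
  have hbnn : 0 ≤ b := hb ▸ Real.sqrt_nonneg _
  have hb2 : b ^ 2 = A + B := by
    rw [hb, sq, Real.mul_self_sqrt (by linarith)]
  have hint : ∀ a c : ℝ, 1 ≤ a → 1 ≤ c → IntervalIntegrable w volume a c := by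
    intro a c ha hc
    apply ContinuousOn.intervalIntegrable
    apply hw.mono
    intro x hx
    rcases le_total a c with h | h
    · rw [uIcc_of_le h] at hx; exact le_trans ha hx.1
    · rw [uIcc_of_ge h] at hx; exact le_trans hc hx.1
  rcases eq_or_lt_of_le hbnn with hb0 | hbpos
  · -- b = 0 case: A = B = 0, so w ≤ 0 on [1,∞)
    have hAB : A + B = 0 := by rw [← hb2, ← hb0]; ring
    intro r hr
    have hwle : ∀ x ∈ Icc (1:ℝ) r, w x ≤ 0 := by
      intro x hx
      have h1 := hineq x hx.1
      have hx0 : (0:ℝ) < x := lt_of_lt_of_le zero_lt_one hx.1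
      nlinarith [sq_nonneg (∫ t in (1:ℝ)..x, w t), one_div_pos.mpr hx0,
        mul_nonneg (le_of_lt (one_div_pos.mpr hx0)) (sq_nonneg (∫ t in (1:ℝ)..x, w t))]
    have : (∫ t in (1:ℝ)..r, w t) ≤ 0 := by
      have := integral_mono_on hr (hint 1 r le_rfl hr)
        (_root_.intervalIntegrable_const (c := (0:ℝ))) hwle
      simpa using this
    have : b * r = 0 := by rw [← hb0]; ring
    linarith
  intro r₀ hr₀
  by_contra hcon
  push_neg at hcon
  set W : ℝ → ℝ := fun r => ∫ t in (1:ℝ)..r, w t with hWdef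
  have hWcont : ContinuousOn W (Icc 1 r₀) := by
    rw [show Icc (1:ℝ) r₀ = uIcc 1 r₀ from (uIcc_of_le hr₀).symm]
    apply continuousOn_primitive_interval
    rw [uIcc_of_le hr₀]
    exact (hw.mono Icc_subset_Ici_self).integrableOn_Icc
  set h : ℝ → ℝ := fun r => b * r - W r with hhdef
  have hhcont : ContinuousOn h (Icc 1 r₀) :=
    ((continuous_const.mul continuous_id).continuousOn).sub hWcont
  have hh1 : h 1 = b := by simp [hhdef, hWdef]
  have hhr₀ : h r₀ < 0 := by
    have : h r₀ = b * r₀ - W r₀ := rfl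
    rw [this]; linarith
  set S : Set ℝ := Icc 1 r₀ ∩ h ⁻¹' (Iic 0) with hSdef
  have hScl : IsClosed S :=
    hhcont.preimage_isClosed_of_isClosed isClosed_Icc isClosed_Iic
  have hSne : S.Nonempty := ⟨r₀, ⟨hr₀, le_refl _⟩, le_of_lt hhr₀⟩
  have hSbdd : BddBelow S := ⟨1, fun x hx => hx.1.1⟩
  set α : ℝ := sInf S with hαdef
  have hαS : α ∈ S := hScl.csInf_mem hSne hSbdd
  have hα1 : 1 ≤ α := hαS.1.1
  have hαr₀ : α ≤ r₀ := hαS.1.2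
  have hhα : h α ≤ 0 := hαS.2
  have hα1' : 1 < α := by
    rcases eq_or_lt_of_le hα1 with h1 | h1
    · exfalso; rw [← h1] at hhα; rw [hh1] at hhα; linarith
    · exact h1
  have hpos : ∀ r, 1 ≤ r → r < α → 0 < h r := by
    intro r hr1 hrα
    by_contra hc
    push_neg at hc
    exact absurd (csInf_le hSbdd ⟨⟨hr1, le_trans (le_of_lt hrα) hαr₀⟩, hc⟩)
      (not_le.mpr hrα)
  -- w α ≤ 0
  have hWα : b * α ≤ W α := by
    have : b * α - W α ≤ 0 := hhα
    linarith
  have hwα : w α ≤ 0 := by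
    have h1 := hineq α hα1
    have hα0 : (0:ℝ) < α := lt_of_lt_of_le zero_lt_one hα1
    have hbα : 0 ≤ b * α := mul_nonneg hbnn (le_of_lt hα0)
    have hsq : (b * α) ^ 2 ≤ (W α) ^ 2 := by nlinarith
    have hkey : b ^ 2 * α ≤ (1 / α) * (W α) ^ 2 := by
      rw [div_mul_eq_mul_div, le_div_iff₀ hα0]
      nlinarith
    nlinarith
  -- continuity of w at α within Ici 1
  have hwcα : ContinuousWithinAt w (Ici 1) α := hw α hα1
  rw [Metric.continuousWithinAt_iff] at hwcα
  obtain ⟨δ, hδ, hδw⟩ := hwcα (b - w α) (by linarith)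
  set r : ℝ := max 1 (α - δ / 2) with hrdef
  have hr1 : 1 ≤ r := le_max_left _ _
  have hrα : r < α := max_lt hα1' (by linarith)
  have hrge : α - δ / 2 ≤ r := le_max_right _ _
  have hwb : ∀ x ∈ Icc r α, w x ≤ b := by
    intro x hx
    have hx1 : 1 ≤ x := le_trans hr1 hx.1
    have hd : dist x α < δ := by
      rw [Real.dist_eq, abs_lt]
      constructor <;> linarith [hx.1, hx.2, hδ]
    have := hδw hx1 hd
    rw [Real.dist_eq, abs_lt] at this
    linarith [this.1, this.2]
  have hintle : (∫ t in r..α, w t) ≤ b * (α - r) := by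
    have := intervalIntegral.integral_mono_on (le_of_lt hrα)
      (hint r α hr1 hα1) (_root_.intervalIntegrable_const (c := b)) hwb
    rwa [intervalIntegral.integral_const, smul_eq_mul, mul_comm] at this
  have hadd : W r + (∫ t in r..α, w t) = W α :=
    intervalIntegral.integral_add_adjacent_intervals (hint 1 r le_rfl hr1)
      (hint r α hr1 hα1)
  have hhr : 0 < h r := hpos r hr1 hrα
  have hcomp : h r ≤ h α := by
    have e1 : h r = b * r - W r := rfl
    have e2 : h α = b * α - W α := rfl
    rw [e1, e2]; linarith
  linarith
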